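/- Fix any sign configuration ξ : ℤ²_e → {−1,+1} and let Y and Ŷ be the associated forward and backward random walk webs. Then forward paths never cross backward paths: for every (i,m) ∈ ℤ²_e, every (j',m') ∈ ℤ²_o with i ≤ j', if m < Ŷ_{(j',m')}(i) then Y_{(i,m)}(l) < Ŷ_{(j',m')}(l) for all l with i ≤ l ≤ j', and if m > Ŷ_{(j',m')}(i) then Y_{(i,m)}(l) > Ŷ_{(j',m')}(l) for all l with i ≤ l ≤ j'. -/
import Mathlib


noncomputable section

/-- Forward random walk web path started at `(i,n)`, after `k` steps. -/
def Yfwd (ξ : ℤ × ℤ → ℤ) (i n : ℤ) : ℕ → ℤ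
  | 0 => n
  | k + 1 => Yfwd ξ i n k + ξ (i + k, Yfwd ξ i n k)

/-- `Yf ξ i n j` is the position at time `j ≥ i` of the forward random walk web
path `Y_{(i,n)}`; it satisfies `Y(i) = n` and `Y(j+1) = Y(j) + ξ(j, Y(j))`. -/
def Yf (ξ : ℤ × ℤ → ℤ) (i n j : ℤ) : ℤ := Yfwd ξ i n (j - i).toNat

/-- Backward (dual) random walk web path started at `(i,n)`, after `k` backward steps. -/
def Ybwd (ξ : ℤ × ℤ → ℤ) (i n : ℤ) : ℕ → ℤ
  | 0 => n
  | k + 1 => Ybwd ξ i n k - ξ (i - k - 1, Ybwd ξ i n k)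

/-- `Yb ξ i n j` is the position at time `j ≤ i` of the backward random walk web
path `Ŷ_{(i,n)}`; it satisfies `Ŷ(i) = n` and `Ŷ(j-1) = Ŷ(j) - ξ(j-1, Ŷ(j))`. -/
def Yb (ξ : ℤ × ℤ → ℤ) (i n j : ℤ) : ℤ := Ybwd ξ i n (i - j).toNat

lemma Yf_step (ξ : ℤ × ℤ → ℤ) (i m l : ℤ) (h : i ≤ l) :
    Yf ξ i m (l + 1) = Yf ξ i m l + ξ (l, Yf ξ i m l) := by
  unfold Yf
  have h1 : (l + 1 - i).toNat = (l - i).toNat + 1 := by omega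
  have h2 : (i + ((l - i).toNat : ℤ)) = l := by omega
  rw [h1]
  simp only [Yfwd, h2]

lemma Yb_step (ξ : ℤ × ℤ → ℤ) (j' m' l : ℤ) (h : l < j') :
    Yb ξ j' m' l = Yb ξ j' m' (l + 1) - ξ (l, Yb ξ j' m' (l + 1)) := by
  unfold Yb
  have h1 : (j' - l).toNat = (j' - (l + 1)).toNat + 1 := by omega
  have h2 : (j' - ((j' - (l + 1)).toNat : ℤ) - 1) = l := by omega
  rw [h1]
  simp only [Ybwd, h2]

lemma Yb_parity (ξ : ℤ × ℤ → ℤ) (hξ : ∀ z, ξ z = 1 ∨ ξ z = -1) (j' m' : ℤ)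
    (ho : Odd (j' + m')) : ∀ k : ℕ, (j' - (k : ℤ) + Ybwd ξ j' m' k) % 2 = 1 := by
  have h0 : (j' + m') % 2 = 1 := Int.odd_iff.mp ho
  intro k
  induction k with
  | zero => simpa [Ybwd] using h0
  | succ k ih =>
      simp only [Ybwd]
      rcases hξ (j' - (k : ℤ) - 1, Ybwd ξ j' m' k) with h | h <;> rw [h] <;> push_cast <;> omega

lemma step_lt (a e f b f' b' : ℤ) (ha : a = 1 ∨ a = -1) (he : e = 1 ∨ e = -1)
    (hodd : (b - f) % 2 = 1) (hlt : f < b) (hf' : f' = f + a) (hb : b = b' - e)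
    (hcond : b' = f → e = a) : f' < b' ∧ (b' - f') % 2 = 1 := by
  by_cases h : b' = f
  · have h2 := hcond h
    rcases ha with rfl | rfl <;> rcases he with rfl | rfl <;> omega
  · rcases ha with rfl | rfl <;> rcases he with rfl | rfl <;> omega

lemma step_gt (a e f b f' b' : ℤ) (ha : a = 1 ∨ a = -1) (he : e = 1 ∨ e = -1)
    (hodd : (f - b) % 2 = 1) (hlt : b < f) (hf' : f' = f + a) (hb : b = b' - e)
    (hcond : b' = f → e = a) : b' < f' ∧ (f' - b') % 2 = 1 := by
  by_cases h : b' = f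
  · have h2 := hcond h
    rcases ha with rfl | rfl <;> rcases he with rfl | rfl <;> omega
  · rcases ha with rfl | rfl <;> rcases he with rfl | rfl <;> omega

/-- forward paths never cross backward paths. For every sign
configuration `ξ`, every `(i,m) ∈ ℤ²ₑ` and `(j',m') ∈ ℤ²ₒ` with `i ≤ j'`: if
`m < Ŷ_{(j',m')}(i)` then `Y_{(i,m)}(l) < Ŷ_{(j',m')}(l)` for all `i ≤ l ≤ j'`,
and if `m > Ŷ_{(j',m')}(i)` then `Y_{(i,m)}(l) > Ŷ_{(j',m')}(l)` for all
`i ≤ l ≤ j'`. -/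
theorem forward_backward_noncrossing (ξ : ℤ × ℤ → ℤ)
    (hξ : ∀ z, ξ z = 1 ∨ ξ z = -1) (i m j' m' : ℤ)
    (he : Even (i + m)) (ho : Odd (j' + m')) (hij : i ≤ j') :
    (m < Yb ξ j' m' i → ∀ l : ℤ, i ≤ l → l ≤ j' → Yf ξ i m l < Yb ξ j' m' l) ∧
    (m > Yb ξ j' m' i → ∀ l : ℤ, i ≤ l → l ≤ j' → Yf ξ i m l > Yb ξ j' m' l) := by
  have hYfi : Yf ξ i m i = m := by simp [Yf, Yfwd]
  -- parity of the backward path at any time l ≤ j'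
  have hpar : ∀ l : ℤ, l ≤ j' → (l + Yb ξ j' m' l) % 2 = 1 := by
    intro l hl
    have := Yb_parity ξ hξ j' m' ho (j' - l).toNat
    have h2 : (((j' - l).toNat : ℤ)) = j' - l := by omega
    rw [h2] at this
    simpa [Yb, sub_sub_cancel] using this
  have hem : (i + m) % 2 = 0 := Int.even_iff.mp he
  have key : ∀ l : ℤ, i ≤ l → l ≤ j' →
      ((m < Yb ξ j' m' i →
        Yf ξ i m l < Yb ξ j' m' l ∧ (Yb ξ j' m' l - Yf ξ i m l) % 2 = 1) ∧
       (Yb ξ j' m' i < m →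
        Yb ξ j' m' l < Yf ξ i m l ∧ (Yf ξ i m l - Yb ξ j' m' l) % 2 = 1)) := by
    refine Int.le_induction ?_ ?_
    · intro _
      have hp := hpar i hij
      rw [hYfi]
      exact ⟨fun h => ⟨h, by omega⟩, fun h => ⟨h, by omega⟩⟩
    · intro l hil ih hl1
      have hlj : l < j' := by omega
      have ihl := ih (le_of_lt hlj)
      have hfstep := Yf_step ξ i m l hil
      have hbstep := Yb_step ξ j' m' l hlj
      constructor
      · intro h
        obtain ⟨h1, h2⟩ := ihl.1 h
        exact step_lt (ξ (l, Yf ξ i m l)) (ξ (l, Yb ξ j' m' (l + 1)))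
          (Yf ξ i m l) (Yb ξ j' m' l) (Yf ξ i m (l + 1)) (Yb ξ j' m' (l + 1))
          (hξ _) (hξ _) h2 h1 hfstep hbstep (fun hh => by rw [hh])
      · intro h
        obtain ⟨h1, h2⟩ := ihl.2 h
        exact step_gt (ξ (l, Yf ξ i m l)) (ξ (l, Yb ξ j' m' (l + 1)))
          (Yf ξ i m l) (Yb ξ j' m' l) (Yf ξ i m (l + 1)) (Yb ξ j' m' (l + 1))
          (hξ _) (hξ _) h2 h1 hfstep hbstep (fun hh => by rw [hh])
  exact ⟨fun h l h1 h2 => ((key l h1 h2).1 h).1,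
         fun h l h1 h2 => ((key l h1 h2).2 h).1⟩

end
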